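/- arXiv:math/0605306 — 3 statements merged into one kernel-verified Lean document; each statement's English description precedes it below -/
import Mathlib

section
/- Let ρ and σ be two well agreeing near weights on R, let f, g ∈ R \ {0}, and set a := (ρ(f), σ(f)) and b := (ρ(g), σ(g)). Then there exist λ, μ ∈ {0, 1}, not both zero, such that λf + μg ≠ 0 and lub(a, b) = (ρ(λf + μg), σ(λf + μg)). In particular, if f, g lie in a subset S ⊆ R closed under addition, then lub(a, b) ∈ H(S). -/
/-! If the value pairs of `f` and `g` are comparable, their lub is attained by `f` or by `g`.
Otherwise they differ in both coordinates, and since a near weight is non-archimedean with equality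
at distinct values, both weights of `f + g` are the maxima. -/

structure NearWeight (F R : Type*) [Field F] [CommRing R] [Algebra F R] where
  w : R → WithBot ℕ
  N0 : ∀ f : R, w f = ⊥ ↔ f = 0
  N1 : ∀ (c : F) (f : R), c ≠ 0 → w (c • f) = w f
  N2 : ∀ f g : R, w (f + g) ≤ max (w f) (w g)
  N3 : ∀ f g h : R, w f < w g → w (f * h) ≤ w (g * h)
  N3' : ∀ f g h : R, w f < w g → w 1 < w h → w (f * h) < w (g * h)
  N4 : ∀ f g : R, w 1 < w f → w 1 < w g → w f = w g →
      ∃ c : F, c ≠ 0 ∧ w (f - c • g) < w f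
  N5 : ∀ f g : R, w (f * g) ≤ w f + w g
  N5' : ∀ f g : R, w 1 < w f → w 1 < w g → w (f * g) = w f + w g
  norm0 : ∀ f : R, f ≠ 0 → w f ≤ w 1 → w f = 0
  normgcd : ∀ d : ℕ, (∀ f : R, w 1 < w f → ∃ k : ℕ, w f = ((d * k : ℕ) : WithBot ℕ)) → d = 1

namespace NearWeight

variable {F R : Type*} [Field F] [CommRing R] [Algebra F R]

def U (ρ : NearWeight F R) : Set R := {r | ρ.w r ≤ ρ.w 1}

def M (ρ : NearWeight F R) : Set R := {r | ρ.w 1 < ρ.w r}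

def nval (ρ : NearWeight F R) (f : R) : ℕ := (ρ.w f).unbotD 0

def Hset (ρ σ : NearWeight F R) (S : Set R) : Set (ℕ × ℕ) :=
  {p | ∃ f ∈ S, f ≠ 0 ∧ (ρ.nval f, σ.nval f) = p}

def WellAgreeing (ρ σ : NearWeight F R) : Prop :=
  (Hset ρ σ Set.univ)ᶜ.Finite ∧ ρ.U ∩ σ.U = Set.range (algebraMap F R)

noncomputable def xH (ρ σ : NearWeight F R) (n : ℕ) : ℕ :=
  sInf {m | (m, n) ∈ Hset ρ σ Set.univ}

noncomputable def yH (ρ σ : NearWeight F R) (n : ℕ) : ℕ :=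
  sInf {m | (n, m) ∈ Hset ρ σ Set.univ}

def lub (a b : ℕ × ℕ) : ℕ × ℕ := (max a.1 b.1, max a.2 b.2)

noncomputable def Gamma (ρ σ : NearWeight F R) : Set (ℕ × ℕ) :=
  {p | ∃ m : ℕ, p = (m, yH ρ σ m)} ∪ {p | ∃ n : ℕ, p = (xH ρ σ n, n)}

def Hbarx (ρ σ : NearWeight F R) : Set ℕ := {m | (m, 0) ∈ Hset ρ σ Set.univ}

def Hbary (ρ σ : NearWeight F R) : Set ℕ := {n | (0, n) ∈ Hset ρ σ Set.univ}

noncomputable def GammaTilde (ρ σ : NearWeight F R) : Set (ℕ × ℕ) :=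
  {p | ∃ m : ℕ, m ∉ Hbarx ρ σ ∧ p = (m, yH ρ σ m)}

def Delta (p : ℕ × ℕ) : Set (ℕ × ℕ) :=
  {q | (q.1 = p.1 ∧ q.2 < p.2) ∨ (q.2 = p.2 ∧ q.1 < p.1)}

noncomputable def tw (ρ : NearWeight F R) (f : R) : ℤ :=
  sInf {z : ℤ | ∃ g ∈ ρ.M, z = (ρ.nval (f * g) : ℤ) - (ρ.nval g : ℤ)}

end NearWeight

variable {F R : Type*} [Field F] [CommRing R] [Algebra F R]

namespace NearWeight

theorem lub_eq_sup (a b : ℕ × ℕ) : lub a b = a ⊔ b := rfl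

theorem fst_ne_and_snd_ne_of_not_le_of_not_le {α β : Type*} [LinearOrder α] [LinearOrder β]
    {a b : α × β} (hab : ¬a ≤ b) (hba : ¬b ≤ a) : a.1 ≠ b.1 ∧ a.2 ≠ b.2 := by
  simp only [Prod.le_def, not_and_or, not_le] at hab hba
  constructor <;> intro h <;> grind

section OneWeight

variable (ρ : NearWeight F R)

theorem w_neg (f : R) : ρ.w (-f) = ρ.w f := by
  simpa using ρ.N1 (-1) f (by norm_num)

theorem nval_neg (f : R) : ρ.nval (-f) = ρ.nval f := by
  rw [nval, w_neg, nval]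

theorem w_eq_nval {f : R} (hf : f ≠ 0) : ρ.w f = ρ.nval f := by
  obtain ⟨n, hn⟩ := WithBot.ne_bot_iff_exists.mp (mt (ρ.N0 f).mp hf)
  rw [nval, ← hn, WithBot.unbotD_coe]
  rfl

theorem w_add_of_lt {f g : R} (h : ρ.w f < ρ.w g) : ρ.w (f + g) = ρ.w g := by
  refine le_antisymm ((ρ.N2 f g).trans (max_eq_right h.le).le) ?_
  have hg := ρ.N2 (f + g) (-f)
  rw [add_neg_cancel_comm, w_neg] at hg
  exact (le_max_iff.mp hg).resolve_right h.not_ge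

theorem w_add_of_ne {f g : R} (h : ρ.w f ≠ ρ.w g) :
    ρ.w (f + g) = max (ρ.w f) (ρ.w g) := by
  rcases h.lt_or_gt with h | h
  · rw [w_add_of_lt ρ h, max_eq_right h.le]
  · rw [add_comm, w_add_of_lt ρ h, max_eq_left h.le]

theorem nval_add_of_nval_ne {f g : R} (hf : f ≠ 0) (hg : g ≠ 0)
    (h : ρ.nval f ≠ ρ.nval g) : ρ.nval (f + g) = max (ρ.nval f) (ρ.nval g) := by
  have hw : ρ.w f ≠ ρ.w g := by
    rwa [w_eq_nval ρ hf, w_eq_nval ρ hg, Ne, Nat.cast_inj]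
  rw [nval, w_add_of_ne ρ hw, w_eq_nval ρ hf, w_eq_nval ρ hg]
  rfl

theorem add_ne_zero_of_nval_ne {f g : R} (h : ρ.nval f ≠ ρ.nval g) : f + g ≠ 0 := by
  intro hfg
  rw [← neg_eq_of_add_eq_zero_right hfg, nval_neg] at h
  exact h rfl

end OneWeight

theorem exists_lub_eq (ρ σ : NearWeight F R) {f g : R} (hf : f ≠ 0) (hg : g ≠ 0) :
    ∃ l m : F, (l = 0 ∨ l = 1) ∧ (m = 0 ∨ m = 1) ∧ ¬(l = 0 ∧ m = 0) ∧
      l • f + m • g ≠ 0 ∧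
      lub (ρ.nval f, σ.nval f) (ρ.nval g, σ.nval g) =
        (ρ.nval (l • f + m • g), σ.nval (l • f + m • g)) := by
  by_cases hab : (ρ.nval f, σ.nval f) ≤ (ρ.nval g, σ.nval g)
  · refine ⟨0, 1, .inl rfl, .inr rfl, by simp, by simpa using hg, ?_⟩
    simpa [lub_eq_sup] using hab
  by_cases hba : (ρ.nval g, σ.nval g) ≤ (ρ.nval f, σ.nval f)
  · refine ⟨1, 0, .inr rfl, .inl rfl, by simp, by simpa using hf, ?_⟩
    simpa [lub_eq_sup] using hba
  obtain ⟨hρ, hσ⟩ := fst_ne_and_snd_ne_of_not_le_of_not_le hab hba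
  refine ⟨1, 1, .inr rfl, .inr rfl, by simp, by simpa using ρ.add_ne_zero_of_nval_ne hρ, ?_⟩
  simp [lub, ρ.nval_add_of_nval_ne hf hg hρ, σ.nval_add_of_nval_ne hf hg hσ]

theorem smul_add_smul_mem {S : Set R} (hS : ∀ a ∈ S, ∀ b ∈ S, a + b ∈ S) {f g : R}
    (hf : f ∈ S) (hg : g ∈ S) {l m : F} (hl : l = 0 ∨ l = 1) (hm : m = 0 ∨ m = 1)
    (hlm : ¬(l = 0 ∧ m = 0)) : l • f + m • g ∈ S := by
  rcases hl with rfl | rfl <;> rcases hm with rfl | rfl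
  · exact absurd ⟨rfl, rfl⟩ hlm
  · simpa using hg
  · simpa using hf
  · simpa using hS f hf g hg

end NearWeight

theorem stmt1_general
    (ρ σ : NearWeight F R)
    (f g : R) (hf : f ≠ 0) (hg : g ≠ 0) :
    (∃ l m : F, (l = 0 ∨ l = 1) ∧ (m = 0 ∨ m = 1) ∧ ¬(l = 0 ∧ m = 0) ∧
      l • f + m • g ≠ 0 ∧
      NearWeight.lub (ρ.nval f, σ.nval f) (ρ.nval g, σ.nval g) =
        (ρ.nval (l • f + m • g), σ.nval (l • f + m • g))) ∧
    (∀ S : Set R, (∀ a ∈ S, ∀ b ∈ S, a + b ∈ S) → f ∈ S → g ∈ S →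
      NearWeight.lub (ρ.nval f, σ.nval f) (ρ.nval g, σ.nval g) ∈ NearWeight.Hset ρ σ S) := by
  obtain ⟨l, m, hl, hm, hlm, hne, hlub⟩ := NearWeight.exists_lub_eq ρ σ hf hg
  refine ⟨⟨l, m, hl, hm, hlm, hne, hlub⟩, fun S hS hfS hgS => ?_⟩
  exact ⟨l • f + m • g, NearWeight.smul_add_smul_mem hS hfS hgS hl hm hlm, hne, hlub.symm⟩

theorem stmt1
    (hinj : Function.Injective (algebraMap F R))
    (hsur : ¬ Function.Surjective (algebraMap F R))
    (ρ σ : NearWeight F R) (hwa : NearWeight.WellAgreeing ρ σ)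
    (f g : R) (hf : f ≠ 0) (hg : g ≠ 0) :
    (∃ l m : F, (l = 0 ∨ l = 1) ∧ (m = 0 ∨ m = 1) ∧ ¬(l = 0 ∧ m = 0) ∧
      l • f + m • g ≠ 0 ∧
      NearWeight.lub (ρ.nval f, σ.nval f) (ρ.nval g, σ.nval g) =
        (ρ.nval (l • f + m • g), σ.nval (l • f + m • g))) ∧
    (∀ S : Set R, (∀ a ∈ S, ∀ b ∈ S, a + b ∈ S) → f ∈ S → g ∈ S →
      NearWeight.lub (ρ.nval f, σ.nval f) (ρ.nval g, σ.nval g) ∈ NearWeight.Hset ρ σ S) :=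
  stmt1_general ρ σ f g hf hg
end

section
/- Let ρ and σ be two well agreeing near weights on R, and for each a ∈ Γ choose an element φ_a ∈ R \ {0} with (ρ(φ_a), σ(φ_a)) = a. Then the family B := {φ_a : a ∈ Γ} is a basis of R as an F-vector space. -/
variable {F R : Type*} [Field F] [CommRing R] [Algebra F R]

/-!
Subtracting suitable multiples of the `φ_a` lowers values (axiom `N4`). Descent on `ρ` with the
`φ_(m, y_H m)` reduces every element to `U_ρ`; descent on `σ` inside `U_ρ` with the
`φ_(x_H n, n) = φ_(0, n)` reduces it further to `U_ρ ∩ U_σ = F`, which is spanned by `φ_(0, 0)`.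
In a vanishing combination, the terms of maximal `ρ`-value `M` and, among them, of maximal
`σ`-value `n` cannot cancel: for `n = y_H M` there is only one such term, and for `M = x_H n` they
would add up to an element with values `(< x_H n, n)`.
-/

namespace NearWeight

section Basic

variable (ρ : NearWeight F R)

@[simp]
theorem w_zero : ρ.w 0 = ⊥ := (ρ.N0 0).2 rfl

theorem w_ne_bot {f : R} (hf : f ≠ 0) : ρ.w f ≠ ⊥ := fun h => hf ((ρ.N0 f).1 h)

theorem ne_zero_of_w_eq_coe {f : R} {m : ℕ} (h : ρ.w f = m) : f ≠ 0 := by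
  rintro rfl
  simp at h

theorem ne_zero_of_mem_M {f : R} (hf : f ∈ ρ.M) : f ≠ 0 := by
  rintro rfl
  exact not_lt_bot (ρ.w_zero ▸ hf : ρ.w 1 < ⊥)

theorem w_smul {c : F} (hc : c ≠ 0) (f : R) : ρ.w (c • f) = ρ.w f := ρ.N1 c f hc

theorem w_one [Nontrivial R] : ρ.w 1 = 0 := ρ.norm0 1 one_ne_zero le_rfl

theorem w_add_eq_left {f g : R} (h : ρ.w g < ρ.w f) : ρ.w (f + g) = ρ.w f := by
  refine le_antisymm ((ρ.N2 f g).trans_eq (max_eq_left h.le)) ?_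
  have hf : ρ.w f ≤ max (ρ.w (f + g)) (ρ.w g) := by
    simpa [ρ.w_neg] using ρ.N2 (f + g) (-g)
  exact (le_max_iff.1 hf).resolve_right h.not_ge

theorem w_sum_lt {ι : Type*} {s : Finset ι} {f : ι → R} {M : WithBot ℕ} (hM : ⊥ < M)
    (h : ∀ i ∈ s, ρ.w (f i) < M) : ρ.w (∑ i ∈ s, f i) < M := by
  classical
  induction s using Finset.induction_on with
  | empty => simpa using hM
  | insert a s ha ih =>
    rw [Finset.sum_insert ha]
    exact (ρ.N2 _ _).trans_lt <| max_lt (h a (s.mem_insert_self a))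
      (ih fun i hi => h i (Finset.mem_insert_of_mem hi))

theorem w_sum_eq_of_forall_lt {ι : Type*} {s : Finset ι} {f : ι → R} {i₀ : ι} (hi₀ : i₀ ∈ s)
    (h₀ : f i₀ ≠ 0) (h : ∀ j ∈ s, j ≠ i₀ → ρ.w (f j) < ρ.w (f i₀)) :
    ρ.w (∑ i ∈ s, f i) = ρ.w (f i₀) := by
  classical
  rw [← Finset.add_sum_erase s f hi₀]
  refine ρ.w_add_eq_left (ρ.w_sum_lt (ρ.w_ne_bot h₀).bot_lt fun j hj => ?_)
  exact h j (Finset.mem_of_mem_erase hj) (Finset.ne_of_mem_erase hj)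

theorem w_sum_smul_eq_of_injOn {ι : Type*} {s : Finset ι} {c : ι → F} {φ : ι → R} {t : ι}
    (ht : t ∈ s) (hc : ∀ i ∈ s, c i ≠ 0) (hφt : φ t ≠ 0)
    (hinj : Set.InjOn (fun i => ρ.w (φ i)) s) (hmax : ∀ i ∈ s, ρ.w (φ i) ≤ ρ.w (φ t)) :
    ρ.w (∑ i ∈ s, c i • φ i) = ρ.w (φ t) := by
  rw [ρ.w_sum_eq_of_forall_lt ht (smul_ne_zero (hc t ht) hφt), ρ.w_smul (hc t ht)]
  intro j hj hjt
  rw [ρ.w_smul (hc j hj), ρ.w_smul (hc t ht)]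
  exact (hmax j hj).lt_of_ne fun h => hjt (hinj hj ht h)

def uSubmodule : Submodule F R where
  carrier := ρ.U
  add_mem' ha hb := (ρ.N2 _ _).trans (max_le ha hb)
  zero_mem' := by simp [U]
  smul_mem' c f hf := by
    by_cases hc : c = 0
    · simp [hc, U]
    · exact (ρ.w_smul hc f).trans_le hf

/-- Descent on `ρ f`: by `N4`, an `f ∈ V ∩ M_ρ` is a multiple of an element of `V ∩ S` up to an
element of `V` of smaller value. -/
theorem le_of_mem_U_of_exists_w_eq {V S : Submodule F R} (hU : ∀ f ∈ V, f ∈ ρ.U → f ∈ S)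
    (hM : ∀ f ∈ V, f ∈ ρ.M → ∃ g ∈ V ⊓ S, ρ.w g = ρ.w f) : V ≤ S := by
  intro f hfV
  induction hwf : ρ.w f using WellFoundedLT.induction generalizing f with
  | _ v ih =>
    by_cases hfU : f ∈ ρ.U
    · exact hU f hfV hfU
    have hfM : ρ.w 1 < ρ.w f := not_le.1 hfU
    obtain ⟨g, ⟨hgV, hgS⟩, hgw⟩ := hM f hfV hfM
    obtain ⟨c, -, hc⟩ := ρ.N4 f g hfM (hgw ▸ hfM) hgw.symm
    have hrest : f - c • g ∈ S :=
      ih _ (hwf ▸ hc) (V.sub_mem hfV (V.smul_mem c hgV)) rfl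
    simpa using S.add_mem hrest (S.smul_mem c hgS)

end Basic

section Gamma

variable {ρ σ : NearWeight F R}

theorem mem_Hset_univ_of_w_eq {f : R} {m n : ℕ} (hρ : ρ.w f = m) (hσ : σ.w f = n) :
    (m, n) ∈ Hset ρ σ Set.univ :=
  ⟨f, Set.mem_univ f, ρ.ne_zero_of_w_eq_coe hρ, by simp [nval, hρ, hσ]⟩

theorem xH_le_of_w_eq {f : R} {m n : ℕ} (hρ : ρ.w f = m) (hσ : σ.w f = n) : xH ρ σ n ≤ m :=
  Nat.sInf_le (mem_Hset_univ_of_w_eq hρ hσ)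

theorem yH_le_of_w_eq {f : R} {m n : ℕ} (hρ : ρ.w f = m) (hσ : σ.w f = n) : yH ρ σ m ≤ n :=
  Nat.sInf_le (mem_Hset_univ_of_w_eq hρ hσ)

variable {ι : Type*} {φ : ι → R} {p : ι → ℕ × ℕ}
  (hρ : ∀ i, ρ.w (φ i) = (p i).1) (hσ : ∀ i, σ.w (φ i) = (p i).2)
include hρ hσ

theorem sum_smul_ne_zero_of_mem_Gamma (hp : Function.Injective p)
    (hΓ : ∀ i, p i ∈ Gamma ρ σ) {s : Finset ι} (hs : s.Nonempty) {c : ι → F}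
    (hc : ∀ i ∈ s, c i ≠ 0) : ∑ i ∈ s, c i • φ i ≠ 0 := by
  classical
  intro hsum
  obtain ⟨b, hb, hbmax⟩ := s.exists_max_image (fun i => (p i).1) hs
  set M := (p b).1
  have hsplit : ∑ i ∈ s.filter (fun i => (p i).1 = M), c i • φ i
      + ∑ i ∈ s.filter (fun i => ¬(p i).1 = M), c i • φ i = 0 := by
    rwa [Finset.sum_filter_add_sum_filter_not]
  set T := s.filter fun i => (p i).1 = M
  have hT (j) (hj : j ∈ T) : j ∈ s ∧ (p j).1 = M := Finset.mem_filter.1 hj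
  obtain ⟨t, htT, htmax⟩ := T.exists_max_image (fun i => (p i).2) ⟨b, Finset.mem_filter.2 ⟨hb, rfl⟩⟩
  have hpT {i j} (hi : i ∈ T) (hj : j ∈ T) (h : (p i).2 = (p j).2) : i = j :=
    hp (Prod.ext ((hT i hi).2.trans (hT j hj).2.symm) h)
  set g := ∑ i ∈ T, c i • φ i
  have hσg : σ.w g = (p t).2 := by
    rw [← hσ]
    refine σ.w_sum_smul_eq_of_injOn htT (fun i hi => hc i (hT i hi).1)
      (σ.ne_zero_of_w_eq_coe (hσ t)) (fun i hi j hj hij => ?_) fun j hj => ?_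
    · simp only [hσ, Nat.cast_inj] at hij
      exact hpT hi hj hij
    · simpa only [hσ, Nat.cast_le] using htmax j hj
  have hρg : ρ.w g < M := by
    rw [eq_neg_of_add_eq_zero_left hsplit, ρ.w_neg]
    refine ρ.w_sum_lt (WithBot.bot_lt_coe M) fun j hj => ?_
    obtain ⟨hjs, hjM⟩ := Finset.mem_filter.1 hj
    rw [ρ.w_smul (hc j hjs), hρ, Nat.cast_lt]
    exact (hbmax j hjs).lt_of_ne hjM
  rcases hΓ t with ⟨m, hm⟩ | ⟨n, hn⟩
  · have hTt : T = {t} := by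
      refine Finset.eq_singleton_iff_unique_mem.2 ⟨htT, fun j hj => hpT hj htT ?_⟩
      refine (htmax j hj).antisymm ?_
      have hyH := yH_le_of_w_eq (hρ j) (hσ j)
      rw [(hT j hj).2, ← (hT t htT).2] at hyH
      simpa [hm] using hyH
    have hgt : g = c t • φ t := by simp only [g, hTt, Finset.sum_singleton]
    rw [hgt, ρ.w_smul (hc t (hT t htT).1), hρ, (hT t htT).2] at hρg
    exact lt_irrefl _ hρg
  · have hg0 : g ≠ 0 := σ.ne_zero_of_w_eq_coe hσg
    have hxH := xH_le_of_w_eq (ρ.w_eq_nval hg0) hσg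
    rw [ρ.w_eq_nval hg0, Nat.cast_lt, ← (hT t htT).2] at hρg
    rw [hn] at hρg hxH
    exact absurd hxH (not_le.2 hρg)

theorem linearIndependent_of_mem_Gamma (hp : Function.Injective p)
    (hΓ : ∀ i, p i ∈ Gamma ρ σ) : LinearIndependent F φ := by
  rw [linearIndependent_iff]
  intro l hl
  by_contra hl0
  refine sum_smul_ne_zero_of_mem_Gamma hρ hσ hp hΓ (Finsupp.support_nonempty_iff.2 hl0)
    (fun i hi => Finsupp.mem_support_iff.1 hi) ?_
  rwa [Finsupp.linearCombination_apply, Finsupp.sum] at hl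

variable (hUU : ρ.U ∩ σ.U = Set.range (algebraMap F R)) (hΓ : Gamma ρ σ ⊆ Set.range p)
include hUU hΓ

theorem range_algebraMap_subset_span [Nontrivial R] :
    Set.range (algebraMap F R) ⊆ Submodule.span F (Set.range φ) := by
  obtain ⟨i, hi⟩ := hΓ (Or.inl ⟨0, rfl⟩ : (0, yH ρ σ 0) ∈ Gamma ρ σ)
  have hy : yH ρ σ 0 = 0 := by
    simpa using yH_le_of_w_eq (ρ.w_one.trans Nat.cast_zero.symm) (σ.w_one.trans Nat.cast_zero.symm)
  have hφi : φ i ∈ ρ.U ∩ σ.U := ⟨by simp [U, hρ, hi, ρ.w_one], by simp [U, hσ, hi, hy, σ.w_one]⟩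
  obtain ⟨d, hd⟩ := hUU ▸ hφi
  have hd0 : d ≠ 0 := by
    rintro rfl
    exact σ.ne_zero_of_w_eq_coe (hσ i) (by simp [← hd])
  rintro _ ⟨c, rfl⟩
  rw [show algebraMap F R c = (c / d) • φ i by
    rw [← hd, Algebra.smul_def, ← map_mul, div_mul_cancel₀ _ hd0]]
  exact Submodule.smul_mem _ _ (Submodule.subset_span ⟨i, rfl⟩)

theorem uSubmodule_le_span [Nontrivial R] : ρ.uSubmodule ≤ Submodule.span F (Set.range φ) := by
  refine σ.le_of_mem_U_of_exists_w_eq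
    (fun f hfρ hfσ => range_algebraMap_subset_span hρ hσ hUU hΓ (hUU ▸ ⟨hfρ, hfσ⟩))
    fun f hfρ hfσ => ?_
  have hf0 := σ.ne_zero_of_mem_M hfσ
  have hρf : ρ.w f = (0 : ℕ) := by rw [ρ.norm0 f hf0 hfρ, Nat.cast_zero]
  have hx : xH ρ σ (σ.nval f) = 0 :=
    Nat.eq_zero_of_le_zero (xH_le_of_w_eq hρf (σ.w_eq_nval hf0))
  obtain ⟨i, hi⟩ := hΓ (Or.inr ⟨σ.nval f, rfl⟩)
  refine ⟨φ i, ⟨?_, Submodule.subset_span ⟨i, rfl⟩⟩, by rw [hσ, hi, σ.w_eq_nval hf0]⟩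
  show ρ.w (φ i) ≤ ρ.w 1
  simp [hρ, hi, hx, ρ.w_one]

theorem span_eq_top_of_Gamma_subset_range : Submodule.span F (Set.range φ) = ⊤ := by
  obtain ⟨i, hi⟩ := hΓ (Or.inl ⟨0, rfl⟩ : (0, yH ρ σ 0) ∈ Gamma ρ σ)
  have : Nontrivial R := ⟨⟨φ i, 0, ρ.ne_zero_of_w_eq_coe (hρ i)⟩⟩
  refine eq_top_iff.2 <| ρ.le_of_mem_U_of_exists_w_eq
    (fun f _ hf => uSubmodule_le_span hρ hσ hUU hΓ hf) fun f _ hf => ?_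
  obtain ⟨j, hj⟩ := hΓ (Or.inl ⟨ρ.nval f, rfl⟩)
  exact ⟨φ j, ⟨trivial, Submodule.subset_span ⟨j, rfl⟩⟩,
    by rw [hρ, hj, ρ.w_eq_nval (ρ.ne_zero_of_mem_M hf)]⟩

end Gamma

end NearWeight

theorem stmt6_general
    (ρ σ : NearWeight F R) (hwa : NearWeight.WellAgreeing ρ σ)
    (φ : NearWeight.Gamma ρ σ → R)
    (hφ0 : ∀ a, φ a ≠ 0)
    (hφ : ∀ a : NearWeight.Gamma ρ σ, (ρ.nval (φ a), σ.nval (φ a)) = (a : ℕ × ℕ)) :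
    LinearIndependent F φ ∧ Submodule.span F (Set.range φ) = ⊤ := by
  have hρ (a) : ρ.w (φ a) = (a : ℕ × ℕ).1 := by rw [ρ.w_eq_nval (hφ0 a), ← hφ a]
  have hσ (a) : σ.w (φ a) = (a : ℕ × ℕ).2 := by rw [σ.w_eq_nval (hφ0 a), ← hφ a]
  exact ⟨NearWeight.linearIndependent_of_mem_Gamma hρ hσ Subtype.val_injective Subtype.prop,
    NearWeight.span_eq_top_of_Gamma_subset_range hρ hσ hwa.2 fun a ha => ⟨⟨a, ha⟩, rfl⟩⟩

theorem stmt6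
    (hinj : Function.Injective (algebraMap F R))
    (hsur : ¬ Function.Surjective (algebraMap F R))
    (ρ σ : NearWeight F R) (hwa : NearWeight.WellAgreeing ρ σ)
    (φ : NearWeight.Gamma ρ σ → R)
    (hφ0 : ∀ a, φ a ≠ 0)
    (hφ : ∀ a : NearWeight.Gamma ρ σ, (ρ.nval (φ a), σ.nval (φ a)) = (a : ℕ × ℕ)) :
    LinearIndependent F φ ∧ Submodule.span F (Set.range φ) = ⊤ :=
  stmt6_general ρ σ hwa φ hφ0 hφ
end

section
/- Let R be a commutative F-algebra admitting two well agreeing near weights ρ and σ. Then R is an integral domain. -/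
variable {F R : Type*} [Field F] [CommRing R] [Algebra F R]

/-! If `f * g = 0` with `f ≠ 0`, then `g ∉ M_ρ`, since multiplication by an element of `M_ρ`
strictly increases weights (N3 with `f = 0`). Hence `g ∈ U_ρ ∩ U_σ = F`, so `g` is zero or a unit.
Nontriviality of `R` comes from `M_ρ ≠ ∅`: otherwise the gcd normalization would hold vacuously
for `d = 0`. -/

namespace NearWeight

theorem exists_mem_M (ρ : NearWeight F R) : ∃ h, h ∈ ρ.M := by
  by_contra hM
  exact zero_ne_one (ρ.normgcd 0 fun f hf => (hM ⟨f, hf⟩).elim)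

theorem nontrivial (ρ : NearWeight F R) : Nontrivial R := by
  obtain ⟨h, hh⟩ := ρ.exists_mem_M
  exact ⟨⟨1, h, fun e => (ne_of_lt hh) (congrArg ρ.w e)⟩⟩

theorem w_pos_iff_ne_zero (ρ : NearWeight F R) {g : R} : ⊥ < ρ.w g ↔ g ≠ 0 := by
  rw [bot_lt_iff_ne_bot, Ne, ρ.N0]

theorem mul_ne_zero_of_mem_M (ρ : NearWeight F R) {g h : R} (hg : g ≠ 0) (hh : h ∈ ρ.M) :
    g * h ≠ 0 := by
  have hlt := ρ.N3' 0 g h (by rwa [(ρ.N0 0).2 rfl, w_pos_iff_ne_zero]) hh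
  rwa [zero_mul, (ρ.N0 0).2 rfl, w_pos_iff_ne_zero] at hlt

theorem mem_U_of_mul_eq_zero (ρ : NearWeight F R) {f g : R} (hf : f ≠ 0) (hfg : f * g = 0) :
    g ∈ ρ.U := by
  show ρ.w g ≤ ρ.w 1
  by_contra hg
  exact ρ.mul_ne_zero_of_mem_M hf (not_le.1 hg) hfg

end NearWeight

theorem stmt11_general
    (ρ σ : NearWeight F R) (hwa : NearWeight.WellAgreeing ρ σ) :
    IsDomain R := by
  have := ρ.nontrivial
  have : NoZeroDivisors R := by
    refine ⟨fun {f g} hfg => or_iff_not_imp_left.2 fun hf => ?_⟩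
    obtain ⟨c, rfl⟩ : g ∈ Set.range (algebraMap F R) :=
      hwa.2 ▸ ⟨ρ.mem_U_of_mul_eq_zero hf hfg, σ.mem_U_of_mul_eq_zero hf hfg⟩
    by_contra hc
    have hunit : IsUnit (algebraMap F R c) :=
      (Ne.isUnit fun h => hc (by rw [h, map_zero])).map (algebraMap F R)
    exact hf (hunit.mul_left_eq_zero.1 hfg)
  exact NoZeroDivisors.to_isDomain R

theorem stmt11
    (hinj : Function.Injective (algebraMap F R))
    (hsur : ¬ Function.Surjective (algebraMap F R))
    (ρ σ : NearWeight F R) (hwa : NearWeight.WellAgreeing ρ σ) :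
    IsDomain R :=
  stmt11_general ρ σ hwa
end
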